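/- arXiv:1612.07739 — 4 statements merged into one kernel-verified Lean document; each statement's English description precedes it below -/
import Mathlib

section
/- Let O be a commutative ring, G a group, and ζ : G → O^× a group homomorphism into the group of units of O. If the automorphism η_ζ of O[G] is inner, i.e. there exists a unit u of O[G] such that ζ(x)·x = u·x·u⁻¹ in O[G] for all x ∈ G, then ζ is the trivial homomorphism: ζ(x) = 1 for all x ∈ G. Consequently the map ζ ↦ η_ζ induces an injective group homomorphism from Hom(G, O^×) to the outer automorphism group Out(O[G]) = Aut(O[G])/Inn(O[G]). -/
/-!
Apply the augmentation `O[G] → O`, `x ↦ 1`: it is an `O`-algebra map to a commutative ring, so it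
kills the conjugation by `u` and turns `ζ(x) • x = u * (ζ'(x) • x) * u⁻¹` into `ζ(x) = ζ'(x)`.
-/

theorem eq_of_smul_eq_conj_smul {R A : Type*} [CommSemiring R] [Semiring A] [Algebra R A]
    (ε : A →ₐ[R] R) (u : Aˣ) {r s : R} {a : A} (ha : IsUnit (ε a))
    (h : r • a = u * (s • a) * ↑u⁻¹) : r = s := by
  have hu : ε u * ε ↑u⁻¹ = 1 := by rw [← map_mul, Units.mul_inv, map_one]
  have := congrArg ε h
  simp only [map_smul, map_mul, smul_eq_mul] at this
  refine ha.mul_left_injective ?_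
  calc r * ε a = ε u * (s * ε a) * ε ↑u⁻¹ := this
    _ = s * ε a * (ε u * ε ↑u⁻¹) := by ring
    _ = s * ε a := by rw [hu, mul_one]

theorem MonoidAlgebra.eq_of_smul_of_eq_conj_smul_of {O G : Type*} [CommSemiring O] [Monoid G]
    (u : (MonoidAlgebra O G)ˣ) {r s : O} {x : G}
    (h : r • of O G x = u * (s • of O G x) * ↑u⁻¹) : r = s :=
  eq_of_smul_eq_conj_smul (lift O O G 1) u (by simp only [lift_of, MonoidHom.one_apply, isUnit_one]) h

theorem stmt3 (O : Type*) [CommRing O] (G : Type*) [Group G] :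
    (∀ ζ : G →* Oˣ,
      (∃ u : (MonoidAlgebra O G)ˣ, ∀ x : G,
        (ζ x : O) • MonoidAlgebra.of O G x
          = (u : MonoidAlgebra O G) * MonoidAlgebra.of O G x * ((u⁻¹ : (MonoidAlgebra O G)ˣ) : MonoidAlgebra O G)) →
      ∀ x : G, ζ x = 1)
    ∧ (∀ ζ ζ' : G →* Oˣ,
      (∃ u : (MonoidAlgebra O G)ˣ, ∀ x : G,
        (ζ x : O) • MonoidAlgebra.of O G x
          = (u : MonoidAlgebra O G) * ((ζ' x : O) • MonoidAlgebra.of O G x) * ((u⁻¹ : (MonoidAlgebra O G)ˣ) : MonoidAlgebra O G)) →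
      ζ = ζ') := by
  refine ⟨fun ζ ⟨u, hu⟩ x => Units.ext ?_, fun ζ ζ' ⟨u, hu⟩ => MonoidHom.ext fun x => Units.ext ?_⟩
  · refine MonoidAlgebra.eq_of_smul_of_eq_conj_smul_of (x := x) u ?_
    rw [Units.val_one, one_smul]
    exact hu x
  · exact MonoidAlgebra.eq_of_smul_of_eq_conj_smul_of u (hu x)
end

section
/- Let O be a commutative ring, A an associative unital O-algebra, P a group, and σ : P → A^× a group homomorphism into the group of units of A. Let H be a normal subgroup of P and D a subalgebra of A such that σ(h) ∈ D for all h ∈ H and σ(u)·D·σ(u)⁻¹ = D for all u ∈ P. Let T ⊆ P be a set of representatives of the cosets of H in P, and suppose that A is the internal direct sum, as an O-module, of the O-submodules D·σ(t) for t ∈ T. Let ζ : P → O^× be a group homomorphism with ζ(h) = 1 for all h ∈ H. Then there is a unique O-algebra automorphism α of A such that α(d·σ(u)) = ζ(u)·d·σ(u) for all d ∈ D and all u ∈ P; in particular, α fixes D elementwise and satisfies α(σ(u)) = ζ(u)·σ(u) for all u ∈ P. -/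
/-!
Let `α` be the linear automorphism of `A = ⨁_{t ∈ T} D·σ(t)` acting on `D·σ(t)` by `ζ(t)`.
Writing `u = t·h⁻¹` with `t ∈ T`, `h ∈ H`, we get `d·σ(u) = (d·σ(t)σ(h⁻¹)σ(t)⁻¹)·σ(t) ∈ D·σ(t)` and
`ζ(t) = ζ(u)`, so `α` multiplies every `d·σ(u)` by `ζ(u)`. These products span `A`, which gives
uniqueness, and `α` is multiplicative on them because
`(d·σ(s))·(c·σ(u)) = (d·σ(s)cσ(s)⁻¹)·σ(su)` with `d·σ(s)cσ(s)⁻¹ ∈ D` and `ζ(su) = ζ(s)ζ(u)`.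
-/

open Pointwise

namespace DirectSum.IsInternal

variable {R M ι : Type*} [CommSemiring R] [AddCommMonoid M] [Module R M] [DecidableEq ι]
  {N : ι → Submodule R M}

noncomputable def unitsSMulEquiv (h : IsInternal N) (c : ι → Rˣ) : M ≃ₗ[R] M :=
  let e := LinearEquiv.ofBijective (coeLinearMap N) h
  e.symm.trans ((DFinsupp.mapRange.linearEquiv fun i => LinearEquiv.smulOfUnit (c i)).trans e)

theorem unitsSMulEquiv_apply_of_mem (h : IsInternal N) (c : ι → Rˣ) {i : ι} {x : M}
    (hx : x ∈ N i) : h.unitsSMulEquiv c x = (c i : R) • x := by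
  have hsymm :
      (LinearEquiv.ofBijective (coeLinearMap N) h).symm x = of (fun i => N i) i ⟨x, hx⟩ := by
    rw [LinearEquiv.symm_apply_eq]
    exact (coeLinearMap_of N i ⟨x, hx⟩).symm
  have hscale : (DFinsupp.mapRange.linearEquiv fun i => LinearEquiv.smulOfUnit (c i))
      (of (fun i => N i) i ⟨x, hx⟩) = of (fun i => N i) i ((c i : R) • ⟨x, hx⟩) :=
    DFinsupp.mapRange_single (hf := fun i => map_zero _)
  simp only [unitsSMulEquiv, LinearEquiv.trans_apply, hsymm, hscale]
  exact coeLinearMap_of N i _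

end DirectSum.IsInternal

section CharacterTwist

variable {O A P : Type*} [CommRing O] [Ring A] [Algebra O A] [Group P]
  {σ : P →* Aˣ} {D : Subalgebra O A} {ζ : P →* Oˣ}

variable (σ D ζ) in
def IsCharacterTwist (f : A → A) : Prop :=
  ∀ d ∈ D, ∀ u : P, f (d * (σ u : A)) = (ζ u : O) • (d * (σ u : A))

namespace IsCharacterTwist

variable {f : A → A}

theorem apply_of_mem (hf : IsCharacterTwist σ D ζ f) {d : A} (hd : d ∈ D) : f d = d := by
  simpa using hf d hd 1

theorem apply_units (hf : IsCharacterTwist σ D ζ f) (u : P) :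
    f (σ u : A) = (ζ u : O) • (σ u : A) := by
  simpa using hf 1 D.one_mem u

theorem map_one (hf : IsCharacterTwist σ D ζ f) : f 1 = 1 :=
  hf.apply_of_mem D.one_mem

theorem linearMap_ext (hspan : Submodule.span O ((D : Set A) * Set.range fun u => (σ u : A)) = ⊤)
    {f g : A →ₗ[O] A} (hf : IsCharacterTwist σ D ζ f) (hg : IsCharacterTwist σ D ζ g) :
    f = g :=
  LinearMap.ext_on hspan <| by
    rintro _ ⟨d, hd, _, ⟨u, rfl⟩, rfl⟩
    rw [hf d hd u, hg d hd u]

theorem map_mul (hconj : ∀ u : P, ∀ d ∈ D, (σ u : A) * d * ((σ u)⁻¹ : Aˣ) ∈ D)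
    (hspan : Submodule.span O ((D : Set A) * Set.range fun u => (σ u : A)) = ⊤)
    {f : A →ₗ[O] A} (hf : IsCharacterTwist σ D ζ f) (x y : A) : f (x * y) = f x * f y := by
  suffices (LinearMap.mul O A).compr₂ f = (LinearMap.mul O A).compl₁₂ f f from
    LinearMap.congr_fun₂ this x y
  refine LinearMap.ext_on hspan ?_
  rintro _ ⟨d, hd, _, ⟨s, rfl⟩, rfl⟩
  refine LinearMap.ext_on hspan ?_
  rintro _ ⟨c, hc, _, ⟨u, rfl⟩, rfl⟩
  have hprod : d * (σ s : A) * (c * σ u) = d * ((σ s : A) * c * ((σ s)⁻¹ : Aˣ)) * σ (s * u) := by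
    simp [mul_assoc]
  simp only [LinearMap.compr₂_apply, LinearMap.compl₁₂_apply, LinearMap.mul_apply']
  rw [hprod, hf _ (D.mul_mem hd (hconj s c hc)), hf d hd, hf c hc, ← hprod, _root_.map_mul,
    Units.val_mul, smul_mul_smul_comm]

end IsCharacterTwist

theorem span_mul_range_eq_top {T : Set P} [DecidableEq T]
    (hdirect : DirectSum.IsInternal fun t : T =>
      (Subalgebra.toSubmodule D).map (LinearMap.mulRight O (σ t : A))) :
    Submodule.span O ((D : Set A) * Set.range fun u => (σ u : A)) = ⊤ := by
  refine eq_top_iff.2 (hdirect.submodule_iSup_eq_top ▸ iSup_le fun t => ?_)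
  rintro _ ⟨d, hd, rfl⟩
  exact Submodule.subset_span (Set.mul_mem_mul hd (Set.mem_range_self _))

theorem mul_mem_map_mulRight_of_inv_mul_mem {H : Subgroup P} (hHD : ∀ h ∈ H, (σ h : A) ∈ D)
    (hconj : ∀ u : P, ∀ d ∈ D, (σ u : A) * d * ((σ u)⁻¹ : Aˣ) ∈ D)
    {u t : P} (hut : u⁻¹ * t ∈ H) {d : A} (hd : d ∈ D) :
    d * σ u ∈ (Subalgebra.toSubmodule D).map (LinearMap.mulRight O (σ t : A)) := by
  have hH : t⁻¹ * u ∈ H := by simpa using H.inv_mem hut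
  refine ⟨d * ((σ t : A) * σ (t⁻¹ * u) * ((σ t)⁻¹ : Aˣ)), D.mul_mem hd (hconj t _ (hHD _ hH)), ?_⟩
  simp [mul_assoc]

theorem exists_linearEquiv_isCharacterTwist {H : Subgroup P} {T : Set P} [DecidableEq T]
    (hHD : ∀ h ∈ H, (σ h : A) ∈ D)
    (hconj : ∀ u : P, ∀ d ∈ D, (σ u : A) * d * ((σ u)⁻¹ : Aˣ) ∈ D)
    (hT : ∀ u : P, ∃ t ∈ T, u⁻¹ * t ∈ H)
    (hdirect : DirectSum.IsInternal fun t : T =>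
      (Subalgebra.toSubmodule D).map (LinearMap.mulRight O (σ t : A)))
    (hζ : ∀ h ∈ H, ζ h = 1) :
    ∃ f : A ≃ₗ[O] A, IsCharacterTwist σ D ζ f := by
  refine ⟨hdirect.unitsSMulEquiv fun t => ζ t, fun d hd u => ?_⟩
  obtain ⟨t, htT, hut⟩ := hT u
  have hζt : ζ t = ζ u := by rw [← mul_inv_cancel_left u t, map_mul, hζ _ hut, mul_one]
  rw [hdirect.unitsSMulEquiv_apply_of_mem _ (i := ⟨t, htT⟩)
    (mul_mem_map_mulRight_of_inv_mul_mem hHD hconj hut hd), hζt]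

end CharacterTwist

theorem stmt5_general (O A : Type*) [CommRing O] [Ring A] [Algebra O A]
    (P : Type*) [Group P] [DecidableEq P] (σ : P →* Aˣ)
    (H : Subgroup P) (D : Subalgebra O A)
    (hHD : ∀ h ∈ H, ((σ h : Aˣ) : A) ∈ D)
    (hstab : ∀ u : P,
      (fun d : A => ((σ u : Aˣ) : A) * d * (((σ u)⁻¹ : Aˣ) : A)) '' (D : Set A) = (D : Set A))
    (T : Set P) (hT : ∀ u : P, ∃! t : P, t ∈ T ∧ u⁻¹ * t ∈ H)
    (hdirect : DirectSum.IsInternal fun t : T =>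
      (Subalgebra.toSubmodule D).map (LinearMap.mulRight O (((σ (t : P)) : Aˣ) : A)))
    (ζ : P →* Oˣ) (hζ : ∀ h ∈ H, ζ h = 1) :
    (∃! α : A ≃ₐ[O] A, ∀ d ∈ D, ∀ u : P,
        α (d * ((σ u : Aˣ) : A)) = (ζ u : O) • (d * ((σ u : Aˣ) : A)))
    ∧ ∀ α : A ≃ₐ[O] A,
        (∀ d ∈ D, ∀ u : P,
          α (d * ((σ u : Aˣ) : A)) = (ζ u : O) • (d * ((σ u : Aˣ) : A))) →
        (∀ d ∈ D, α d = d) ∧ ∀ u : P, α ((σ u : Aˣ) : A) = (ζ u : O) • ((σ u : Aˣ) : A) := by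
  have hconj : ∀ u : P, ∀ d ∈ D, (σ u : A) * d * ((σ u)⁻¹ : Aˣ) ∈ D := fun u d hd =>
    (hstab u).subset (Set.mem_image_of_mem _ hd)
  have hspan := span_mul_range_eq_top hdirect
  obtain ⟨f, hf⟩ := exists_linearEquiv_isCharacterTwist hHD hconj
    (fun u => (hT u).exists) hdirect hζ
  refine ⟨⟨AlgEquiv.ofLinearEquiv f hf.map_one (hf.map_mul hconj hspan), hf, fun β hβ => ?_⟩,
    fun β hβ => ⟨fun _ => IsCharacterTwist.apply_of_mem hβ, IsCharacterTwist.apply_units hβ⟩⟩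
  exact AlgEquiv.ext <| LinearMap.congr_fun <|
    IsCharacterTwist.linearMap_ext (f := β.toLinearMap) hspan hβ hf

theorem stmt5 (O A : Type*) [CommRing O] [Ring A] [Algebra O A]
    (P : Type*) [Group P] [DecidableEq P] (σ : P →* Aˣ)
    (H : Subgroup P) [H.Normal] (D : Subalgebra O A)
    (hHD : ∀ h ∈ H, ((σ h : Aˣ) : A) ∈ D)
    (hstab : ∀ u : P,
      (fun d : A => ((σ u : Aˣ) : A) * d * (((σ u)⁻¹ : Aˣ) : A)) '' (D : Set A) = (D : Set A))
    (T : Set P) (hT : ∀ u : P, ∃! t : P, t ∈ T ∧ u⁻¹ * t ∈ H)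
    (hdirect : DirectSum.IsInternal fun t : T =>
      (Subalgebra.toSubmodule D).map (LinearMap.mulRight O (((σ (t : P)) : Aˣ) : A)))
    (ζ : P →* Oˣ) (hζ : ∀ h ∈ H, ζ h = 1) :
    (∃! α : A ≃ₐ[O] A, ∀ d ∈ D, ∀ u : P,
        α (d * ((σ u : Aˣ) : A)) = (ζ u : O) • (d * ((σ u : Aˣ) : A)))
    ∧ ∀ α : A ≃ₐ[O] A,
        (∀ d ∈ D, ∀ u : P,
          α (d * ((σ u : Aˣ) : A)) = (ζ u : O) • (d * ((σ u : Aˣ) : A))) →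
        (∀ d ∈ D, α d = d) ∧ ∀ u : P, α ((σ u : Aˣ) : A) = (ζ u : O) • ((σ u : Aˣ) : A) :=
  stmt5_general O A P σ H D hHD hstab T hT hdirect ζ hζ
end

section
/- Let O be a commutative ring, P a group, Q a subgroup of P, φ : Q → P a group homomorphism, and ζ : P → O^× a group homomorphism such that ζ(φ(w)) = ζ(w) for all w ∈ Q. Let W = O[P] ⊗_{O[Q]} O[P], where the left factor O[P] is regarded as a right O[Q]-module via x·w = x·φ(w) for x ∈ P, w ∈ Q, and the right factor O[P] is a left O[Q]-module via the inclusion Q ⊆ P. Then there is a unique O-linear automorphism f of W satisfying f(u ⊗ v) = ζ(u·v)·(u ⊗ v) for all u, v ∈ P, and this f satisfies f(x·m·y) = ζ(x)·ζ(y)·(x·f(m)·y) for all x, y ∈ P and m ∈ W, where x·m·y denotes the O[P]-O[P]-bimodule action on W. -/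
open TensorProduct

/-- The balancing relations for the tensor product `W = O[P]_φ ⊗_{O[Q]} O[P]`:
the `O`-submodule of `O[P] ⊗[O] O[P]` spanned by the elements
`(x·φ(w)) ⊗ y − x ⊗ (w·y)` for `x, y ∈ P`, `w ∈ Q`.  The quotient of `O[P] ⊗[O] O[P]`
by this submodule is the canonical realisation of `O[P]_φ ⊗_{O[Q]} O[P]`, where the left
factor `O[P]` is a right `O[Q]`-module via `x·w = x·φ(w)` and the right factor is a left
`O[Q]`-module via the inclusion `Q ⊆ P`. -/
noncomputable def focRel (O : Type*) [CommRing O] (P : Type*) [Group P]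
    (Q : Subgroup P) (φ : Q →* P) :
    Submodule O (MonoidAlgebra O P ⊗[O] MonoidAlgebra O P) :=
  Submodule.span O {a | ∃ (x y : P) (w : Q),
    a = (MonoidAlgebra.of O P x * MonoidAlgebra.of O P (φ w)) ⊗ₜ[O] MonoidAlgebra.of O P y
      - MonoidAlgebra.of O P x ⊗ₜ[O] (MonoidAlgebra.of O P (w : P) * MonoidAlgebra.of O P y)}

/-- The map `m ↦ x·m·y` on `O[P] ⊗[O] O[P]` (left multiplication by the group element `x`
on the left factor, right multiplication by the group element `y` on the right factor). -/
noncomputable def bimodMapAux (O : Type*) [CommRing O] (P : Type*) [Group P] (x y : P) :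
    MonoidAlgebra O P ⊗[O] MonoidAlgebra O P →ₗ[O] MonoidAlgebra O P ⊗[O] MonoidAlgebra O P :=
  TensorProduct.map (LinearMap.mulLeft O (MonoidAlgebra.of O P x))
    (LinearMap.mulRight O (MonoidAlgebra.of O P y))

lemma focRel_le (O : Type*) [CommRing O] (P : Type*) [Group P]
    (Q : Subgroup P) (φ : Q →* P) (x y : P) :
    focRel O P Q φ ≤ (focRel O P Q φ).comap (bimodMapAux O P x y) := by
  rw [focRel, Submodule.span_le]
  rintro a ⟨u, v, w, rfl⟩
  simp only [SetLike.mem_coe, Submodule.mem_comap, map_sub, bimodMapAux,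
    TensorProduct.map_tmul, LinearMap.mulLeft_apply, LinearMap.mulRight_apply]
  refine Submodule.subset_span ⟨x * u, v * y, w, ?_⟩
  simp only [map_mul, mul_assoc]

/-- The `O[P]`-`O[P]`-bimodule action `m ↦ x·m·y` of a pair of group elements `x, y ∈ P`
on `W = O[P]_φ ⊗_{O[Q]} O[P]`. -/
noncomputable def bimodAct (O : Type*) [CommRing O] (P : Type*) [Group P]
    (Q : Subgroup P) (φ : Q →* P) (x y : P) :
    (MonoidAlgebra O P ⊗[O] MonoidAlgebra O P ⧸ focRel O P Q φ) →ₗ[O]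
      (MonoidAlgebra O P ⊗[O] MonoidAlgebra O P ⧸ focRel O P Q φ) :=
  Submodule.mapQ _ _ (bimodMapAux O P x y) (focRel_le O P Q φ x y)

/-!
`f` is induced by `η ⊗ η`, where `η` is the algebra endomorphism `u ↦ ζ(u) u` of `O[P]`;
it respects the balancing relations because `ζ ∘ φ = ζ` on `Q`, and twisting by `ζ⁻¹` inverts
it. Uniqueness and the twisted equivariance hold because `W` is spanned by the classes of the
`u ⊗ v` with `u, v ∈ P`, on which both sides are computed directly.
-/

namespace MonoidAlgebra

variable {O : Type*} [CommSemiring O] {P : Type*} [Monoid P]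

noncomputable def twist (χ : P →* O) : MonoidAlgebra O P →ₐ[O] MonoidAlgebra O P :=
  lift O (MonoidAlgebra O P) P
    { toFun := fun u => χ u • of O P u
      map_one' := by simp [one_def]
      map_mul' := fun u v => by simp }

@[simp]
lemma twist_of (χ : P →* O) (u : P) : twist χ (of O P u) = χ u • of O P u := by
  simp [twist]

end MonoidAlgebra

open MonoidAlgebra

section

variable {O : Type*} [CommRing O] {P : Type*} [Group P] {Q : Subgroup P} {φ : Q →* P}

local notation "W" => MonoidAlgebra O P ⊗[O] MonoidAlgebra O P ⧸ focRel O P Q φ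

lemma focRel_le_comap_map_twist {χ : P →* O} (hχ : ∀ w : Q, χ (φ w) = χ w) :
    focRel O P Q φ ≤
      (focRel O P Q φ).comap (map (twist χ).toLinearMap (twist χ).toLinearMap) := by
  rw [focRel, Submodule.span_le]
  rintro _ ⟨x, y, w, rfl⟩
  have hscale : map (twist χ).toLinearMap (twist χ).toLinearMap
      ((of O P x * of O P (φ w)) ⊗ₜ[O] of O P y - of O P x ⊗ₜ[O] (of O P (w : P) * of O P y))
      = (χ x * χ w * χ y) •
        ((of O P x * of O P (φ w)) ⊗ₜ[O] of O P y
          - of O P x ⊗ₜ[O] (of O P (w : P) * of O P y)) := by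
    simp only [map_sub, map_tmul, AlgHom.toLinearMap_apply, map_mul, twist_of, hχ, smul_sub,
      smul_mul_smul_comm, smul_tmul', tmul_smul, smul_smul]
    ring_nf
  rw [SetLike.mem_coe, Submodule.mem_comap, hscale]
  exact Submodule.smul_mem _ _ (Submodule.subset_span ⟨x, y, w, rfl⟩)

variable (φ) in
noncomputable def twistQuot {χ : P →* O} (hχ : ∀ w : Q, χ (φ w) = χ w) : W →ₗ[O] W :=
  Submodule.mapQ _ _ _ (focRel_le_comap_map_twist hχ)

variable (φ) in
def IsTwistBy (χ : P →* O) (f : W →ₗ[O] W) : Prop :=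
  ∀ u v : P, f (Submodule.Quotient.mk (of O P u ⊗ₜ[O] of O P v))
    = χ (u * v) • Submodule.Quotient.mk (of O P u ⊗ₜ[O] of O P v)

lemma isTwistBy_twistQuot {χ : P →* O} (hχ : ∀ w : Q, χ (φ w) = χ w) :
    IsTwistBy φ χ (twistQuot φ hχ) := fun u v => by
  rw [twistQuot, Submodule.mapQ_apply, map_tmul, AlgHom.toLinearMap_apply,
    AlgHom.toLinearMap_apply, twist_of, twist_of, smul_tmul_smul, map_mul,
    Submodule.Quotient.mk_smul]

lemma focRel_linearMap_ext {M : Type*} [AddCommGroup M] [Module O M] {g h : W →ₗ[O] M}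
    (H : ∀ u v : P, g (Submodule.Quotient.mk (of O P u ⊗ₜ[O] of O P v))
        = h (Submodule.Quotient.mk (of O P u ⊗ₜ[O] of O P v))) :
    g = h := by
  refine Submodule.linearMap_qext _ ?_
  ext u v
  simpa using H u v

lemma IsTwistBy.eq {χ : P →* O} {f g : W →ₗ[O] W} (hf : IsTwistBy φ χ f)
    (hg : IsTwistBy φ χ g) : f = g :=
  focRel_linearMap_ext fun u v => by rw [hf, hg]

lemma bimodAct_mk (x y u v : P) :
    bimodAct O P Q φ x y (Submodule.Quotient.mk (of O P u ⊗ₜ[O] of O P v))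
      = Submodule.Quotient.mk (of O P (x * u) ⊗ₜ[O] of O P (v * y)) := by
  simp [bimodAct, bimodMapAux, map_mul]

lemma IsTwistBy.map_bimodAct {χ : P →* O} {f : W →ₗ[O] W} (hf : IsTwistBy φ χ f)
    (x y : P) (m : W) :
    f (bimodAct O P Q φ x y m) = χ x • χ y • bimodAct O P Q φ x y (f m) := by
  have hcomp : f ∘ₗ bimodAct O P Q φ x y = (χ x * χ y) • (bimodAct O P Q φ x y ∘ₗ f) :=
    focRel_linearMap_ext fun u v => by
      rw [LinearMap.comp_apply, bimodAct_mk, hf, LinearMap.smul_apply, LinearMap.comp_apply, hf,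
        map_smul, bimodAct_mk, smul_smul]
      congr 1
      simp only [map_mul]
      ring
  simpa [mul_smul] using LinearMap.congr_fun hcomp m

lemma twistQuot_comp_twistQuot {χ ψ : P →* O} (hχ : ∀ w : Q, χ (φ w) = χ w)
    (hψ : ∀ w : Q, ψ (φ w) = ψ w) (hχψ : ∀ u, χ u * ψ u = 1) :
    twistQuot φ hχ ∘ₗ twistQuot φ hψ = LinearMap.id :=
  focRel_linearMap_ext fun u v => by
    rw [LinearMap.comp_apply, isTwistBy_twistQuot, map_smul, isTwistBy_twistQuot, smul_smul,
      mul_comm, hχψ, one_smul, LinearMap.id_apply]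

variable (φ) in
noncomputable def twistQuotEquiv (ζ : P →* Oˣ) (hζ : ∀ w : Q, ζ (φ w) = ζ w) : W ≃ₗ[O] W :=
  have hval : ∀ w : Q, (Units.coeHom O).comp ζ (φ w) = (Units.coeHom O).comp ζ w :=
    fun w => congrArg Units.val (hζ w)
  have hinv : ∀ w : Q, (Units.coeHom O).comp ζ⁻¹ (φ w) = (Units.coeHom O).comp ζ⁻¹ w :=
    fun w => by simp [hζ]
  LinearEquiv.ofLinearMap (twistQuot φ hval) (twistQuot φ hinv)
    (twistQuot_comp_twistQuot hval hinv fun u => by simp [← Units.val_mul])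
    (twistQuot_comp_twistQuot hinv hval fun u => by simp [← Units.val_mul])

lemma isTwistBy_twistQuotEquiv (ζ : P →* Oˣ) (hζ : ∀ w : Q, ζ (φ w) = ζ w) :
    IsTwistBy φ ((Units.coeHom O).comp ζ) (twistQuotEquiv φ ζ hζ).toLinearMap :=
  isTwistBy_twistQuot fun w => congrArg Units.val (hζ w)

end

theorem stmt6 (O : Type*) [CommRing O] (P : Type*) [Group P]
    (Q : Subgroup P) (φ : Q →* P) (ζ : P →* Oˣ)
    (hζ : ∀ w : Q, ζ (φ w) = ζ (w : P)) :
    (∃! f : (MonoidAlgebra O P ⊗[O] MonoidAlgebra O P ⧸ focRel O P Q φ) ≃ₗ[O]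
        (MonoidAlgebra O P ⊗[O] MonoidAlgebra O P ⧸ focRel O P Q φ),
      ∀ u v : P,
        f (Submodule.Quotient.mk (MonoidAlgebra.of O P u ⊗ₜ[O] MonoidAlgebra.of O P v))
          = (ζ (u * v) : O) •
            Submodule.Quotient.mk (MonoidAlgebra.of O P u ⊗ₜ[O] MonoidAlgebra.of O P v))
    ∧ ∀ f : (MonoidAlgebra O P ⊗[O] MonoidAlgebra O P ⧸ focRel O P Q φ) ≃ₗ[O]
        (MonoidAlgebra O P ⊗[O] MonoidAlgebra O P ⧸ focRel O P Q φ),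
      (∀ u v : P,
        f (Submodule.Quotient.mk (MonoidAlgebra.of O P u ⊗ₜ[O] MonoidAlgebra.of O P v))
          = (ζ (u * v) : O) •
            Submodule.Quotient.mk (MonoidAlgebra.of O P u ⊗ₜ[O] MonoidAlgebra.of O P v)) →
      ∀ (x y : P) (m : MonoidAlgebra O P ⊗[O] MonoidAlgebra O P ⧸ focRel O P Q φ),
        f (bimodAct O P Q φ x y m)
          = (ζ x : O) • (ζ y : O) • bimodAct O P Q φ x y (f m) := by
  refine ⟨⟨twistQuotEquiv φ ζ hζ, isTwistBy_twistQuotEquiv ζ hζ, fun g hg => ?_⟩, fun f hf => ?_⟩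
  · exact LinearEquiv.toLinearMap_injective
      (IsTwistBy.eq (χ := (Units.coeHom O).comp ζ) hg (isTwistBy_twistQuotEquiv ζ hζ))
  · exact IsTwistBy.map_bimodAct (χ := (Units.coeHom O).comp ζ) (f := f.toLinearMap) hf
end

section
/- Let O be a commutative ring, π an element of O, and p a prime number such that p ∈ πO. Let A be an associative unital O-algebra, let m be a positive integer, and let α be an O-algebra automorphism of A such that α(a) − a ∈ π^m·A for all a ∈ A. Then the p-fold composite α^p satisfies α^p(a) − a ∈ π^{m+1}·A for all a ∈ A. -/
/-!
STATEMENT 7.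
Let `O` be a commutative ring, `π ∈ O`, and `p` a prime with `p ∈ πO`.  Let `A` be an
associative unital `O`-algebra, `m` a positive integer, and `α` an `O`-algebra automorphism
of `A` with `α(a) − a ∈ π^m·A` for all `a ∈ A`.  Then the `p`-fold composite `α^p`
satisfies `α^p(a) − a ∈ π^{m+1}·A` for all `a ∈ A`.
-/
theorem stmt7 (O : Type*) [CommRing O] (π : O) (p : ℕ) (hp : p.Prime)
    (hpπ : ∃ c : O, (p : O) = π * c)
    (A : Type*) [Ring A] [Algebra O A] (m : ℕ) (hm : 0 < m)
    (α : A ≃ₐ[O] A) (hα : ∀ a : A, ∃ b : A, α a - a = π ^ m • b) :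
    ∀ a : A, ∃ b : A, (α ^ p) a - a = π ^ (m + 1) • b := by
  obtain ⟨c, hc⟩ := hpπ
  set S : ℕ → Submodule O A :=
    fun r => LinearMap.range ((π ^ r) • (LinearMap.id : A →ₗ[O] A)) with hS
  have memS : ∀ r (x : A), x ∈ S r ↔ ∃ b : A, x = π ^ r • b := by
    intro r x
    constructor
    · rintro ⟨b, rfl⟩; exact ⟨b, rfl⟩
    · rintro ⟨b, rfl⟩; exact ⟨b, rfl⟩
  have Smono : ∀ r s : ℕ, r ≤ s → S s ≤ S r := by
    intro r s hrs x hx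
    rw [memS] at hx ⊢
    obtain ⟨b, rfl⟩ := hx
    refine ⟨π ^ (s - r) • b, ?_⟩
    rw [smul_smul, ← pow_add, Nat.add_sub_cancel' hrs]
  set f : Module.End O A := α.toLinearMap with hf
  set δ : Module.End O A := f - 1 with hδ
  have hδmem : ∀ x : A, δ x ∈ S m := by
    intro x
    rw [memS]
    obtain ⟨b, hb⟩ := hα x
    refine ⟨b, ?_⟩
    simpa [hδ, hf, LinearMap.sub_apply] using hb
  have hδS : ∀ (r : ℕ) (x : A), x ∈ S r → δ x ∈ S (r + m) := by
    intro r x hx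
    rw [memS] at hx
    obtain ⟨b, rfl⟩ := hx
    obtain ⟨e, he⟩ := (memS m (δ b)).mp (hδmem b)
    rw [memS]
    refine ⟨e, ?_⟩
    rw [map_smul, he, smul_smul, ← pow_add]
  have hδpow : ∀ (k : ℕ) (x : A), (δ ^ k) x ∈ S (k * m) := by
    intro k
    induction k with
    | zero =>
      intro x
      rw [memS]
      exact ⟨x, by simp⟩
    | succ n ih =>
      intro x
      have h2 : (δ ^ (n + 1)) x = δ ((δ ^ n) x) := by
        rw [pow_succ', Module.End.mul_apply]
      rw [h2, Nat.succ_mul]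
      exact hδS (n * m) _ (ih x)
  -- α ^ n applied equals f ^ n applied
  have hpow : ∀ (n : ℕ) (x : A), (α ^ n) x = (f ^ n) x := by
    intro n
    induction n with
    | zero => intro x; simp
    | succ k ih =>
      intro x
      rw [pow_succ, pow_succ]
      have : (α ^ k * α) x = (α ^ k) (α x) := rfl
      rw [this, Module.End.mul_apply, ih]
      rfl
  -- binomial expansion
  have hcomm : Commute δ (1 : Module.End O A) := Commute.one_right δ
  have hbin : f ^ p = ∑ k ∈ Finset.range (p + 1), (p.choose k) • δ ^ k := by
    have hfe : f = δ + 1 := by rw [hδ, sub_add_cancel]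
    rw [hfe, hcomm.add_pow]
    apply Finset.sum_congr rfl
    intro k hk
    rw [one_pow, mul_one, nsmul_eq_mul]
    exact ((Nat.cast_commute (p.choose k) (δ ^ k)).symm).eq
  intro a
  -- the element we must analyze
  have key : (α ^ p) a - a ∈ S (m + 1) := by
    rw [hpow p a, hbin]
    have happ : (∑ k ∈ Finset.range (p + 1), (p.choose k) • δ ^ k) a
        = ∑ k ∈ Finset.range (p + 1), (p.choose k) • (δ ^ k) a := by
      rw [LinearMap.sum_apply]
      exact Finset.sum_congr rfl fun k _ => rfl
    rw [happ, Finset.sum_range_succ' (fun k => (p.choose k) • (δ ^ k) a) p]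
    simp only [Nat.choose_zero_right, pow_zero, one_smul, Module.End.one_apply,
      add_sub_cancel_right]
    apply Submodule.sum_mem
    intro k hk
    rw [Finset.mem_range] at hk
    -- term : p.choose (k+1) • (δ ^ (k+1)) a
    by_cases hkp : k + 1 = p
    · -- top term: choose = 1, use δ^p a ∈ S (p*m) ⊆ S (m+1)
      subst hkp
      rw [Nat.choose_self, one_smul]
      refine Smono (m + 1) ((k + 1) * m) ?_ (hδpow (k + 1) a)
      have h2 : 2 ≤ k + 1 := by
        rcases Nat.lt_or_ge k 1 with h | h
        · interval_cases k
          · exfalso; exact Nat.Prime.one_lt hp |>.ne' rfl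
        · omega
      calc m + 1 ≤ m + m := by omega
        _ = 2 * m := by ring
        _ ≤ (k + 1) * m := Nat.mul_le_mul_right m h2
    · -- middle term: p ∣ choose
      have hlt : k + 1 < p := lt_of_le_of_ne (by omega) hkp
      have hdvd : p ∣ p.choose (k + 1) := hp.dvd_choose_self (Nat.succ_ne_zero k) hlt
      obtain ⟨d, hd⟩ := hdvd
      obtain ⟨b, hb⟩ := (memS m ((δ ^ (k + 1)) a)).mp
        (Smono m ((k + 1) * m) (Nat.le_mul_of_pos_left m (Nat.succ_pos k)) (hδpow (k + 1) a))
      rw [memS]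
      refine ⟨(d : O) • (c • b), ?_⟩
      rw [hd, hb]
      have : (p * d) • (π ^ m • b) = ((p : O) * (d : O)) • (π ^ m • b) := by
        rw [← Nat.cast_smul_eq_nsmul O, Nat.cast_mul]
      rw [this, hc]
      rw [smul_smul, smul_smul, smul_smul]
      ring_nf
  obtain ⟨b, hb⟩ := (memS (m + 1) _).mp key
  exact ⟨b, hb⟩
end
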